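/- arXiv:math/0004001 — 2 statements merged into one kernel-verified Lean document; each statement's English description precedes it below -/
import Mathlib

section
/- For fixed complex parameters a, b, c, one has Γ(a+n)Γ(b+n)/(Γ(c+n)Γ(a+b-c+n)) = 1 + (c-a)(c-b)/(1+c-a-b-n) + O(n^{-2}) as n → ∞ through the positive integers. -/
/-!
Gauss's product formula gives `Γ(a+n)Γ(b+n)/(Γ(c+n)Γ(a+b-c+n)) = ∏_{k ≥ n} (1 + x_k)` with
`x_k = -(c-a)(c-b)/((a+k)(b+k))`, because `(c+k)(a+b-c+k) = (a+k)(b+k) - (c-a)(c-b)`.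
Since `∑ ‖x_k‖ = O(1/n)`, the product is `1 + ∑ x_k + O(n⁻²)`. Replacing `(a+k)(b+k)` by
`(u+k)(u+k+1)` with `u = a+b-c-1` changes `x_k` only by `O(k⁻³)`, and after this replacement the
sum telescopes to `-(c-a)(c-b)/(u+n) = (c-a)(c-b)/(1+c-a-b-n)`.
-/

open Complex Filter Asymptotics Finset Topology

section SecondOrderProduct

variable {ι R : Type*} [NormedCommRing R] [NormOneClass R]

lemma Finset.norm_prod_one_add_sub_one_sub_sum_le (t : Finset ι) (f : ι → R) :
    ‖∏ i ∈ t, (1 + f i) - 1 - ∑ i ∈ t, f i‖ ≤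
      Real.exp (∑ i ∈ t, ‖f i‖) - 1 - ∑ i ∈ t, ‖f i‖ := by
  classical
  induction t using Finset.induction_on with
  | empty => simp
  | insert x t hx IH =>
    rw [prod_insert hx, sum_insert hx, sum_insert hx, Real.exp_add,
      show (1 + f x) * ∏ i ∈ t, (1 + f i) - 1 - (f x + ∑ i ∈ t, f i) =
        (∏ i ∈ t, (1 + f i) - 1 - ∑ i ∈ t, f i) + f x * (∏ i ∈ t, (1 + f i) - 1) by ring]
    refine (norm_add_le_of_le IH ((norm_mul_le _ _).trans
      (mul_le_mul_of_nonneg_left (t.norm_prod_one_add_sub_one_le f) (norm_nonneg _)))).trans ?_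
    have := Real.add_one_le_exp ‖f x‖
    have := Real.add_one_le_exp (∑ i ∈ t, ‖f i‖)
    have : 0 ≤ ∑ i ∈ t, ‖f i‖ := sum_nonneg fun i _ ↦ norm_nonneg _
    nlinarith [norm_nonneg (f x)]

lemma Finset.norm_prod_one_add_sub_one_sub_sum_le_sq (t : Finset ι) (f : ι → R)
    (h : ∑ i ∈ t, ‖f i‖ ≤ 1) :
    ‖∏ i ∈ t, (1 + f i) - 1 - ∑ i ∈ t, f i‖ ≤ (∑ i ∈ t, ‖f i‖) ^ 2 := by
  have h0 : 0 ≤ ∑ i ∈ t, ‖f i‖ := sum_nonneg fun i _ ↦ norm_nonneg _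
  refine (t.norm_prod_one_add_sub_one_sub_sum_le f).trans ?_
  have := Real.abs_exp_sub_one_sub_id_le (x := ∑ i ∈ t, ‖f i‖) (by rwa [abs_of_nonneg h0])
  exact (le_abs_self _).trans this

lemma norm_sub_one_sub_le_of_tendsto_prod_one_add {x Y : ℕ → R} {L : R} {ε δ : ℝ}
    (hL : Tendsto (fun N ↦ ∏ j ∈ range N, (1 + x j)) atTop (𝓝 L))
    (hY : Tendsto Y atTop (𝓝 0))
    (hx : ∀ N, ∑ j ∈ range N, ‖x j‖ ≤ ε) (hε : ε ≤ 1)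
    (hxY : ∀ N, ∑ j ∈ range N, ‖x j + (Y j - Y (j + 1))‖ ≤ δ) :
    ‖L - (1 - Y 0)‖ ≤ ε ^ 2 + δ := by
  have hN : ∀ N, ‖∏ j ∈ range N, (1 + x j) - (1 - Y 0)‖ ≤ ε ^ 2 + δ + ‖Y N‖ := by
    intro N
    have htel : ∑ j ∈ range N, (x j + (Y j - Y (j + 1))) = ∑ j ∈ range N, x j + (Y 0 - Y N) := by
      rw [sum_add_distrib, sum_range_sub']
    have hsplit : ∏ j ∈ range N, (1 + x j) - (1 - Y 0) =
        (∏ j ∈ range N, (1 + x j) - 1 - ∑ j ∈ range N, x j) +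
          ∑ j ∈ range N, (x j + (Y j - Y (j + 1))) + Y N := by
      rw [htel]; ring
    have hprod := (range N).norm_prod_one_add_sub_one_sub_sum_le_sq x ((hx N).trans hε)
    have hsq : (∑ j ∈ range N, ‖x j‖) ^ 2 ≤ ε ^ 2 :=
      pow_le_pow_left₀ (sum_nonneg fun j _ ↦ norm_nonneg _) (hx N) 2
    rw [hsplit]
    refine (norm_add₃_le).trans ?_
    linarith [(norm_sum_le (range N) _).trans (hxY N)]
  have hlim := (hL.sub_const (1 - Y 0)).norm
  refine le_of_tendsto_of_tendsto' hlim ?_ hN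
  simpa using tendsto_const_nhds.add hY.norm

end SecondOrderProduct

lemma GammaSeq_mul_div_eq_prod {a b c d : ℂ} (h : a + b = c + d) {N : ℕ} (hN : N ≠ 0) :
    GammaSeq a N * GammaSeq b N / (GammaSeq c N * GammaSeq d N) =
      ∏ j ∈ range (N + 1), (c + j) * (d + j) / ((a + j) * (b + j)) := by
  have hN' : (N : ℂ) ≠ 0 := Nat.cast_ne_zero.mpr hN
  have hpow : (N : ℂ) ^ a * (N : ℂ) ^ b = (N : ℂ) ^ c * (N : ℂ) ^ d := by
    rw [← cpow_add _ _ hN', ← cpow_add _ _ hN', h]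
  have hne : (N : ℂ) ^ c * N.factorial * ((N : ℂ) ^ d * N.factorial) ≠ 0 := by
    have := Nat.cast_ne_zero (R := ℂ) |>.mpr (Nat.factorial_ne_zero N)
    simp [cpow_eq_zero_iff, hN', this]
  have hnum : (N : ℂ) ^ a * N.factorial * ((N : ℂ) ^ b * N.factorial) =
      (N : ℂ) ^ c * N.factorial * ((N : ℂ) ^ d * N.factorial) := by
    linear_combination ((N.factorial : ℂ) * N.factorial) * hpow
  simp only [GammaSeq]
  rw [div_mul_div_comm, div_mul_div_comm, hnum, div_div_div_cancel_left' _ _ hne,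
    prod_div_distrib, prod_mul_distrib, prod_mul_distrib]

lemma tendsto_prod_div_Gamma_mul_Gamma {a b c d : ℂ} (h : a + b = c + d) (hc : Gamma c ≠ 0)
    (hd : Gamma d ≠ 0) :
    Tendsto (fun N ↦ ∏ j ∈ range N, (c + j) * (d + j) / ((a + j) * (b + j))) atTop
      (𝓝 (Gamma a * Gamma b / (Gamma c * Gamma d))) := by
  have hG := ((GammaSeq_tendsto_Gamma a).mul (GammaSeq_tendsto_Gamma b)).div
    ((GammaSeq_tendsto_Gamma c).mul (GammaSeq_tendsto_Gamma d)) (mul_ne_zero hc hd)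
  rw [← tendsto_add_atTop_iff_nat 1]
  refine hG.congr' ?_
  filter_upwards [eventually_ne_atTop 0] with N hN using GammaSeq_mul_div_eq_prod h hN

lemma tendsto_prod_one_sub_mul_inv_Gamma_add {a b c z : ℂ} (hc : Gamma (c + z) ≠ 0)
    (hd : Gamma (a + b - c + z) ≠ 0) (hab : ∀ j : ℕ, (a + z + j) * (b + z + j) ≠ 0) :
    Tendsto (fun N ↦ ∏ j ∈ range N, (1 - (c - a) * (c - b) * ((a + z + j) * (b + z + j))⁻¹))
      atTop (𝓝 (Gamma (a + z) * Gamma (b + z) / (Gamma (c + z) * Gamma (a + b - c + z)))) := by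
  refine (tendsto_prod_div_Gamma_mul_Gamma (by ring) hc hd).congr
    fun N ↦ prod_congr rfl fun j _ ↦ ?_
  rw [div_eq_mul_inv, show (c + z + j) * (a + b - c + z + j) =
      (a + z + j) * (b + z + j) - (c - a) * (c - b) by ring, sub_mul, mul_inv_cancel₀ (hab j)]

lemma half_le_norm_add_ofReal {z : ℂ} {R k : ℝ} (hz : ‖z‖ ≤ R) (hk : 2 * R ≤ k) :
    k / 2 ≤ ‖z + k‖ := by
  have := norm_sub_norm_le (k : ℂ) (-z)
  rw [norm_neg, sub_neg_eq_add, add_comm, Complex.norm_real, Real.norm_eq_abs] at this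
  linarith [le_abs_self k]

lemma add_ofReal_ne_zero {z : ℂ} {R k : ℝ} (hz : ‖z‖ ≤ R) (hk : 2 * R ≤ k) (hk0 : 0 < k) :
    z + k ≠ 0 :=
  norm_pos_iff.mp ((half_pos hk0).trans_le (half_le_norm_add_ofReal hz hk))

lemma norm_inv_mul_add_ofReal_le {p q : ℂ} {R k : ℝ} (hp : ‖p‖ ≤ R) (hq : ‖q‖ ≤ R)
    (hk : 2 * R ≤ k) (hk0 : 0 < k) : ‖((p + k) * (q + k))⁻¹‖ ≤ 4 / k ^ 2 := by
  rw [norm_inv, norm_mul]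
  calc (‖p + k‖ * ‖q + k‖)⁻¹ ≤ (k / 2 * (k / 2))⁻¹ := by
        gcongr
        exacts [half_le_norm_add_ofReal hp hk, half_le_norm_add_ofReal hq hk]
    _ = 4 / k ^ 2 := by field_simp; ring

lemma norm_inv_mul_sub_inv_mul_le {p q r s : ℂ} {R k : ℝ} (hp : ‖p‖ ≤ R) (hq : ‖q‖ ≤ R)
    (hr : ‖r‖ ≤ R) (hs : ‖s‖ ≤ R) (hk : 2 * R ≤ k) (hk0 : 0 < k) :
    ‖((r + k) * (s + k))⁻¹ - ((p + k) * (q + k))⁻¹‖ ≤ 80 * R / k ^ 3 := by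
  have hR : 0 ≤ R := (norm_nonneg p).trans hp
  have hne {z : ℂ} (hz : ‖z‖ ≤ R) : z + k ≠ 0 := add_ofReal_ne_zero hz hk hk0
  have hlin : ‖p + q - r - s‖ ≤ 4 * R := by
    linarith [norm_sub_le (p + q - r) s, norm_sub_le (p + q) r, norm_add_le p q]
  have hconst : ‖p * q - r * s‖ ≤ 2 * R ^ 2 := by
    have := norm_sub_le (p * q) (r * s)
    rw [norm_mul, norm_mul] at this
    nlinarith [mul_le_mul hp hq (norm_nonneg q) hR, mul_le_mul hr hs (norm_nonneg s) hR]
  have hnum : ‖(p + k) * (q + k) - (r + k) * (s + k)‖ ≤ 5 * R * k := by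
    calc _ = ‖(p + q - r - s) * k + (p * q - r * s)‖ := by ring_nf
      _ ≤ ‖p + q - r - s‖ * k + ‖p * q - r * s‖ := by
        refine (norm_add_le _ _).trans ?_
        rw [norm_mul, Complex.norm_real, Real.norm_of_nonneg hk0.le]
      _ ≤ _ := by nlinarith
  rw [inv_sub_inv' (mul_ne_zero (hne hr) (hne hs)) (mul_ne_zero (hne hp) (hne hq)),
    norm_mul, norm_mul]
  calc _ ≤ 4 / k ^ 2 * (5 * R * k) * (4 / k ^ 2) := by
        gcongr
        exacts [norm_inv_mul_add_ofReal_le hr hs hk hk0, norm_inv_mul_add_ofReal_le hp hq hk hk0]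
    _ = _ := by field_simp; ring

lemma sum_range_div_add_sq_le {x C : ℝ} (hx : 1 ≤ x) (hC : 0 ≤ C) (m : ℕ) :
    ∑ j ∈ range m, C / (x + j) ^ 2 ≤ 2 * C / x := by
  have hterm (j : ℕ) : C / (x + j) ^ 2 ≤ 2 * C / (x + j) - 2 * C / (x + (j + 1 : ℕ)) := by
    have : 1 ≤ x + j := by linarith [(j.cast_nonneg : (0 : ℝ) ≤ j)]
    push_cast
    rw [div_sub_div _ _ (by positivity) (by positivity),
      div_le_div_iff₀ (by positivity) (by positivity)]
    nlinarith [mul_nonneg (mul_nonneg hC (by linarith : (0 : ℝ) ≤ x + j)) (sub_nonneg.mpr this)]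
  calc _ ≤ ∑ j ∈ range m, (2 * C / (x + j) - 2 * C / (x + (j + 1 : ℕ))) :=
        sum_le_sum fun j _ ↦ hterm j
    _ = 2 * C / x - 2 * C / (x + m) := by
        rw [sum_range_sub' (fun j : ℕ ↦ 2 * C / (x + j))]; simp
    _ ≤ 2 * C / x := by
        have : 0 ≤ 2 * C / (x + m) := by positivity
        linarith

lemma sum_range_div_add_cube_le {x C : ℝ} (hx : 1 ≤ x) (hC : 0 ≤ C) (m : ℕ) :
    ∑ j ∈ range m, C / (x + j) ^ 3 ≤ 2 * C / x ^ 2 := by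
  calc _ ≤ ∑ j ∈ range m, C / x / (x + j) ^ 2 := by
        refine sum_le_sum fun j _ ↦ ?_
        have : x ≤ x + j := by linarith [(j.cast_nonneg : (0 : ℝ) ≤ j)]
        rw [div_div, pow_succ, mul_comm x]
        gcongr
    _ ≤ 2 * (C / x) / x := sum_range_div_add_sq_le hx (by positivity) m
    _ = 2 * C / x ^ 2 := by ring

lemma sum_range_norm_inv_mul_le {p q : ℂ} {R x : ℝ} (hp : ‖p‖ ≤ R) (hq : ‖q‖ ≤ R)
    (hx : 2 * R ≤ x) (hx1 : 1 ≤ x) (N : ℕ) :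
    ∑ j ∈ range N, ‖((p + x + j) * (q + x + j))⁻¹‖ ≤ 8 / x := by
  calc _ ≤ ∑ j ∈ range N, 4 / (x + j) ^ 2 := by
        refine sum_le_sum fun j _ ↦ ?_
        have hj : (0 : ℝ) ≤ j := j.cast_nonneg
        have := norm_inv_mul_add_ofReal_le hp hq (k := x + j) (by linarith) (by linarith)
        push_cast at this
        simpa only [add_assoc] using this
    _ ≤ 2 * 4 / x := sum_range_div_add_sq_le hx1 (by norm_num) N
    _ = 8 / x := by ring

lemma sum_range_norm_inv_mul_sub_inv_mul_le {p q r s : ℂ} {R x : ℝ} (hp : ‖p‖ ≤ R)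
    (hq : ‖q‖ ≤ R) (hr : ‖r‖ ≤ R) (hs : ‖s‖ ≤ R) (hx : 2 * R ≤ x) (hx1 : 1 ≤ x) (N : ℕ) :
    ∑ j ∈ range N, ‖((r + x + j) * (s + x + j))⁻¹ - ((p + x + j) * (q + x + j))⁻¹‖ ≤
      160 * R / x ^ 2 := by
  have hR : 0 ≤ R := (norm_nonneg p).trans hp
  calc _ ≤ ∑ j ∈ range N, 80 * R / (x + j) ^ 3 := by
        refine sum_le_sum fun j _ ↦ ?_
        have hj : (0 : ℝ) ≤ j := j.cast_nonneg
        have := norm_inv_mul_sub_inv_mul_le hp hq hr hs (k := x + j) (by linarith) (by linarith)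
        push_cast at this
        simpa only [add_assoc] using this
    _ ≤ 2 * (80 * R) / x ^ 2 := sum_range_div_add_cube_le hx1 (by positivity) N
    _ = _ := by ring

lemma tendsto_div_add_natCast_atTop_zero (D z : ℂ) :
    Tendsto (fun j : ℕ ↦ D / (z + j)) atTop (𝓝 0) := by
  have hcob := (tendsto_const_add_cobounded z).comp (tendsto_natCast_atTop_cobounded (α := ℂ))
  simpa [div_eq_mul_inv] using (tendsto_inv₀_cobounded.comp hcob).const_mul D

lemma add_natCast_add_natCast_ne_zero {z : ℂ} {R : ℝ} {n : ℕ} (hz : ‖z‖ ≤ R) (hnR : 2 * R ≤ n)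
    (hn : 0 < n) (j : ℕ) : z + n + j ≠ 0 := by
  have hj : (0 : ℝ) ≤ j := j.cast_nonneg
  have hn' : (0 : ℝ) < n := Nat.cast_pos.mpr hn
  have := add_ofReal_ne_zero hz (k := n + j) (by linarith) (by linarith)
  push_cast at this
  rwa [← add_assoc] at this

lemma norm_Gamma_ratio_sub_le {a b c : ℂ} {R : ℝ} (ha : ‖a‖ ≤ R) (hb : ‖b‖ ≤ R) (hc : ‖c‖ ≤ R)
    (hd : ‖a + b - c‖ ≤ R) (hu : ‖a + b - c - 1‖ ≤ R) {n : ℕ} (hnR : 2 * R ≤ n) (hn1 : 1 ≤ (n : ℝ))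
    (hnD : 8 * ‖(c - a) * (c - b)‖ ≤ n) :
    ‖Gamma (a + n) * Gamma (b + n) / (Gamma (c + n) * Gamma (a + b - c + n)) -
        (1 - (c - a) * (c - b) / (a + b - c - 1 + n))‖ ≤
      (64 * ‖(c - a) * (c - b)‖ ^ 2 + 160 * R * ‖(c - a) * (c - b)‖) / n ^ 2 := by
  have hne {z : ℂ} (hz : ‖z‖ ≤ R) :=
    add_natCast_add_natCast_ne_zero hz hnR (Nat.one_le_cast.mp hn1)
  have hΓ {z : ℂ} (hz : ‖z‖ ≤ R) : Gamma (z + n) ≠ 0 :=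
    Gamma_ne_zero fun m h ↦ hne hz m (by rw [h]; ring)
  set D := (c - a) * (c - b)
  set x : ℕ → ℂ := fun j ↦ -(D * ((a + n + j) * (b + n + j))⁻¹)
  set Y : ℕ → ℂ := fun j ↦ D / (a + b - c - 1 + n + j)
  have hL : Tendsto (fun N ↦ ∏ j ∈ range N, (1 + x j)) atTop
      (𝓝 (Gamma (a + n) * Gamma (b + n) / (Gamma (c + n) * Gamma (a + b - c + n)))) := by
    simpa only [x, ← sub_eq_add_neg] using tendsto_prod_one_sub_mul_inv_Gamma_add (hΓ hc) (hΓ hd)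
      fun j ↦ mul_ne_zero (hne ha j) (hne hb j)
  have hx (N : ℕ) : ∑ j ∈ range N, ‖x j‖ ≤ 8 * ‖D‖ / n := by
    have := sum_range_norm_inv_mul_le ha hb hnR hn1 N
    simp only [ofReal_natCast] at this
    simp only [x, norm_neg, norm_mul, ← mul_sum]
    calc _ ≤ ‖D‖ * (8 / n) := by gcongr
      _ = _ := by ring
  have hxY (N : ℕ) : ∑ j ∈ range N, ‖x j + (Y j - Y (j + 1))‖ ≤ 160 * R * ‖D‖ / n ^ 2 := by
    have hterm (j : ℕ) : x j + (Y j - Y (j + 1)) = D * (((a + b - c - 1 + n + j) *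
        (a + b - c + n + j))⁻¹ - ((a + n + j) * (b + n + j))⁻¹) := by
      have hu := hne hu j
      have hd := hne hd j
      simp only [x, Y]
      push_cast
      rw [show a + b - c - 1 + n + (j + 1) = a + b - c + n + j by ring]
      field_simp
      ring
    have := sum_range_norm_inv_mul_sub_inv_mul_le ha hb hu hd hnR hn1 N
    simp only [ofReal_natCast] at this
    simp only [hterm, norm_mul, ← mul_sum]
    calc _ ≤ ‖D‖ * (160 * R / n ^ 2) := by gcongr
      _ = _ := by ring
  have := norm_sub_one_sub_le_of_tendsto_prod_one_add hL
    (tendsto_div_add_natCast_atTop_zero D _) hx ((div_le_one (by linarith)).mpr hnD) hxY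
  simp only [CharP.cast_eq_zero, add_zero] at this
  refine this.trans (le_of_eq ?_)
  field_simp
  ring

theorem gamma_ratio_first_order (a b c : ℂ) :
    (fun n : ℕ => Complex.Gamma (a + n) * Complex.Gamma (b + n) /
        (Complex.Gamma (c + n) * Complex.Gamma (a + b - c + n)) -
      (1 + (c - a) * (c - b) / (1 + c - a - b - n))) =O[atTop]
      fun n : ℕ => (n : ℝ) ^ (-2 : ℤ) := by
  obtain ⟨R, ha, hb, hc, hd, hu⟩ : ∃ R : ℝ, ‖a‖ ≤ R ∧ ‖b‖ ≤ R ∧ ‖c‖ ≤ R ∧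
      ‖a + b - c‖ ≤ R ∧ ‖a + b - c - 1‖ ≤ R :=
    ⟨‖a‖ + ‖b‖ + ‖c‖ + ‖a + b - c‖ + ‖a + b - c - 1‖, by
      refine ⟨?_, ?_, ?_, ?_, ?_⟩ <;> linarith [norm_nonneg a, norm_nonneg b, norm_nonneg c,
        norm_nonneg (a + b - c), norm_nonneg (a + b - c - 1)]⟩
  refine IsBigO.of_bound (64 * ‖(c - a) * (c - b)‖ ^ 2 + 160 * R * ‖(c - a) * (c - b)‖) ?_
  filter_upwards [tendsto_natCast_atTop_atTop.eventually_ge_atTop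
    (max (2 * R) (max 1 (8 * ‖(c - a) * (c - b)‖)))] with n hn
  simp only [max_le_iff] at hn
  have hfirst : 1 + (c - a) * (c - b) / (1 + c - a - b - n) =
      1 - (c - a) * (c - b) / (a + b - c - 1 + n) := by
    rw [show 1 + c - a - b - (n : ℂ) = -(a + b - c - 1 + n) by ring, div_neg, ← sub_eq_add_neg]
  rw [hfirst, zpow_neg, norm_inv, norm_zpow, Real.norm_natCast, ← div_eq_mul_inv]
  exact norm_Gamma_ratio_sub_le ha hb hc hd hu hn.1 hn.2.1 hn.2.2
end

section
/- For every nonnegative integer M and fixed complex a, b, c, Γ(a+n)Γ(b+n)/(Γ(c+n)Γ(a+b-c+n)) = 1 + Σ_{m=1}^{M} (c-a)_m (c-b)_m / (m! · (1+c-a-b-n)_m) + O(n^{-M-1}) as n → ∞ through the positive integers. -/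
/-!
Let `f n` be the Gamma ratio, `S n` the truncated series and
`s n = (c + n) (a + b - c + n) / ((a + n) (b + n))`, so that `s n = 1 + O(n⁻²)`.
The functional equation of `Γ` gives `f n = s n * f (n + 1)` exactly, while a telescoping
identity for the hypergeometric terms gives `S n = s n * S (n + 1) + O(n ^ (-M - 2))`.
Hence `D = f - S` satisfies `D n - s n * D (n + 1) = O(n ^ (-M - 2))`. Euler's limit formula
gives `f n → 1`, and `S n → 1`, so `D n → 0`; unrolling the recurrence to infinity, where the
partial products of `s` stay bounded because `∑ ‖s n - 1‖ < ∞`, yields `D n = O(n ^ (-M - 1))`.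
-/

open Complex Filter Asymptotics Polynomial

noncomputable def poch (x : ℂ) (m : ℕ) : ℂ := (ascPochhammer ℂ m).eval x

open Finset Topology

lemma eq_prod_mul_add_sum_sub_mul_succ {R : Type*} [CommRing R] (D s : ℕ → R) {n k : ℕ}
    (hnk : n ≤ k) :
    D n = (∏ i ∈ Ico n k, s i) * D k +
      ∑ j ∈ Ico n k, (∏ i ∈ Ico n j, s i) * (D j - s j * D (j + 1)) := by
  induction k, hnk using Nat.le_induction with
  | base => simp
  | succ k hnk ih =>
    rw [prod_Ico_succ_top hnk, sum_Ico_succ_top hnk, ih]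
    ring

lemma norm_le_mul_add_sum_of_norm_prod_le {𝕜 : Type*} [NormedField 𝕜] {D s : ℕ → 𝕜}
    {n k : ℕ} {K : ℝ} (hprod : ∀ j, ‖∏ i ∈ Ico n j, s i‖ ≤ K) (hnk : n ≤ k) :
    ‖D n‖ ≤ K * (‖D k‖ + ∑ j ∈ Ico n k, ‖D j - s j * D (j + 1)‖) := by
  rw [eq_prod_mul_add_sum_sub_mul_succ D s hnk, mul_add, mul_sum]
  refine (norm_add_le _ _).trans
    (add_le_add ?_ ((norm_sum_le _ _).trans (sum_le_sum fun j _ => ?_)))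
  all_goals rw [norm_mul]; exact mul_le_mul_of_nonneg_right (hprod _) (norm_nonneg _)

lemma norm_prod_le_exp_sum_norm_sub_one {𝕜 ι : Type*} [NormedField 𝕜] (t : Finset ι)
    (x : ι → 𝕜) : ‖∏ i ∈ t, x i‖ ≤ Real.exp (∑ i ∈ t, ‖x i - 1‖) := by
  rw [norm_prod, Real.exp_sum]
  refine prod_le_prod (fun _ _ => norm_nonneg _) fun i _ => ?_
  calc ‖x i‖ ≤ ‖x i - 1‖ + ‖(1 : 𝕜)‖ := norm_le_norm_sub_add _ _
    _ ≤ Real.exp ‖x i - 1‖ := by rw [norm_one]; exact Real.add_one_le_exp _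

lemma sum_Ico_inv_pow_le (p : ℕ) {n : ℕ} (hn : 1 ≤ n) (k : ℕ) :
    ∑ j ∈ Ico n k, ((j : ℝ) ^ (p + 2))⁻¹ ≤ 2 * ((n : ℝ) ^ (p + 1))⁻¹ := by
  have hn' : (0 : ℝ) < n := by exact_mod_cast hn
  calc ∑ j ∈ Ico n k, ((j : ℝ) ^ (p + 2))⁻¹
      ≤ ∑ j ∈ Ico n k, ((n : ℝ) ^ p)⁻¹ * ((j : ℝ) ^ 2)⁻¹ := by
        refine sum_le_sum fun j hj => ?_
        have hnj : (n : ℝ) ≤ j := by exact_mod_cast (mem_Ico.1 hj).1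
        rw [pow_add, mul_inv]
        gcongr
    _ = ((n : ℝ) ^ p)⁻¹ * ∑ j ∈ Ioo (n - 1) k, ((j : ℝ) ^ 2)⁻¹ := by
        rw [mul_sum, show Ico n k = Ioo (n - 1) k by ext; simp only [mem_Ico, mem_Ioo]; omega]
    _ ≤ ((n : ℝ) ^ p)⁻¹ * (2 / ((n - 1 : ℕ) + 1)) := by
        gcongr
        exact sum_Ioo_inv_sq_le _ _
    _ = 2 * ((n : ℝ) ^ (p + 1))⁻¹ := by
        rw [Nat.cast_sub hn, Nat.cast_one, sub_add_cancel, pow_succ]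
        field_simp

theorem isBigO_inv_pow_of_tendsto_zero_of_sub_mul_succ {𝕜 : Type*} [NormedField 𝕜]
    {D s : ℕ → 𝕜} {p : ℕ} (hD : Tendsto D atTop (𝓝 0)) (hs : Summable fun n => ‖s n - 1‖)
    (hrec : (fun n => D n - s n * D (n + 1)) =O[atTop] fun n => ((n : ℝ) ^ (p + 2))⁻¹) :
    D =O[atTop] fun n => ((n : ℝ) ^ (p + 1))⁻¹ := by
  obtain ⟨C, hC0, hC⟩ := hrec.exists_nonneg
  obtain ⟨N, hN⟩ := eventually_atTop.1 (hC.bound.and (eventually_ge_atTop 1))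
  set K := Real.exp (∑' n, ‖s n - 1‖)
  have hprod : ∀ n j, ‖∏ i ∈ Ico n j, s i‖ ≤ K := fun n j =>
    (norm_prod_le_exp_sum_norm_sub_one _ _).trans
      (Real.exp_le_exp.2 (hs.sum_le_tsum _ fun _ _ => norm_nonneg _))
  refine IsBigO.of_bound (K * (2 * C)) (eventually_atTop.2 ⟨N, fun n hn => ?_⟩)
  set B := 2 * C * ((n : ℝ) ^ (p + 1))⁻¹
  have htail : ∀ k, ∑ j ∈ Ico n k, ‖D j - s j * D (j + 1)‖ ≤ B := fun k =>
    calc ∑ j ∈ Ico n k, ‖D j - s j * D (j + 1)‖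
        ≤ ∑ j ∈ Ico n k, C * ((j : ℝ) ^ (p + 2))⁻¹ :=
          sum_le_sum fun j hj => by simpa using (hN j (hn.trans (mem_Ico.1 hj).1)).1
      _ ≤ C * (2 * ((n : ℝ) ^ (p + 1))⁻¹) := by
          rw [← mul_sum]
          exact mul_le_mul_of_nonneg_left (sum_Ico_inv_pow_le p (hN n hn).2 k) hC0
      _ = B := by ring
  have hbound : ∀ k ≥ n, ‖D n‖ ≤ K * (‖D k‖ + B) := fun k hk =>
    (norm_le_mul_add_sum_of_norm_prod_le (hprod n) hk).trans (by gcongr; exact htail k)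
  have hlim : Tendsto (fun k => K * (‖D k‖ + B)) atTop (𝓝 (K * B)) := by
    simpa using (hD.norm.add_const B).const_mul K
  calc ‖D n‖ ≤ K * B := ge_of_tendsto hlim (eventually_atTop.2 ⟨n, hbound⟩)
    _ = K * (2 * C) * ‖((n : ℝ) ^ (p + 1))⁻¹‖ := by simp [B, mul_assoc]

@[simp]
lemma poch_zero (x : ℂ) : poch x 0 = 1 := by simp [poch]

lemma poch_succ (x : ℂ) (m : ℕ) : poch x (m + 1) = poch x m * (x + m) :=
  ascPochhammer_succ_eval m x

lemma poch_sub_one_mul (x : ℂ) (m : ℕ) : poch (x - 1) m * (x - 1 + m) = (x - 1) * poch x m := by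
  rw [← poch_succ]
  simp [poch, ascPochhammer_succ_left]

lemma poch_eq_prod_range (x : ℂ) (m : ℕ) : poch x m = ∏ j ∈ range m, (x + j) := by
  induction m with
  | zero => simp
  | succ m ih => rw [poch_succ, ih, prod_range_succ]

lemma poch_ne_zero_iff {x : ℂ} {m : ℕ} : poch x m ≠ 0 ↔ ∀ k < m, x + k ≠ 0 := by
  simp [poch, ascPochhammer_eval_eq_zero_iff, eq_neg_iff_add_eq_zero, add_comm]

lemma poch_ne_zero_of_le {x : ℂ} {m M : ℕ} (h : poch x M ≠ 0) (hm : m ≤ M) : poch x m ≠ 0 :=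
  poch_ne_zero_iff.2 fun k hk => poch_ne_zero_iff.1 h k (hk.trans_le hm)

noncomputable def hypergeomTerm (α β γ : ℂ) (m : ℕ) : ℂ :=
  poch α m * poch β m / (m.factorial * poch γ m)

noncomputable def hypergeomSum (α β γ : ℂ) (M : ℕ) : ℂ :=
  ∑ m ∈ range (M + 1), hypergeomTerm α β γ m

@[simp]
lemma hypergeomTerm_zero (α β γ : ℂ) : hypergeomTerm α β γ 0 = 1 := by
  simp [hypergeomTerm]

lemma one_add_sum_Icc_hypergeomTerm (α β γ : ℂ) (M : ℕ) :
    1 + ∑ m ∈ Icc 1 M, hypergeomTerm α β γ m = hypergeomSum α β γ M := by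
  rw [hypergeomSum, range_eq_Ico, sum_eq_sum_Ico_succ_bot M.succ_pos, hypergeomTerm_zero,
    zero_add, Nat.succ_eq_add_one, Ico_add_one_right_eq_Icc]

/-- The summand is `u (m + 1) - u m` for `u m = (α)ₘ (β)ₘ / ((m - 1)! (γ)ₘ₋₁)`, `u 0 = 0`. -/
lemma sum_range_mul_hypergeomTerm (α β : ℂ) {γ : ℂ} {M : ℕ} (hγ : poch γ M ≠ 0) :
    ∑ m ∈ range (M + 1), (α * β + m * (α + β - γ + 1)) * hypergeomTerm α β γ m =
      poch α (M + 1) * poch β (M + 1) / (M.factorial * poch γ M) := by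
  induction M with
  | zero => simp [poch_succ, hypergeomTerm]
  | succ M ih =>
    rw [poch_succ] at hγ
    have hγM : poch γ M ≠ 0 := left_ne_zero_of_mul hγ
    have hγM' : γ + M ≠ 0 := right_ne_zero_of_mul hγ
    rw [sum_range_succ, ih hγM, hypergeomTerm]
    simp only [poch_succ, Nat.factorial_succ]
    push_cast
    field_simp
    ring

lemma hypergeomTerm_sub_one_mul (α β : ℂ) {γ : ℂ} {m : ℕ} (hγ : poch γ m ≠ 0)
    (hγ1 : γ - 1 ≠ 0) :
    hypergeomTerm α β (γ - 1) m * (γ - 1) = hypergeomTerm α β γ m * (γ - 1 + m) := by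
  have key := poch_sub_one_mul γ m
  have hne : poch (γ - 1) m * (γ - 1 + m) ≠ 0 := key ▸ mul_ne_zero hγ1 hγ
  have h1 : poch (γ - 1) m ≠ 0 := left_ne_zero_of_mul hne
  have h2 : γ - 1 + m ≠ 0 := right_ne_zero_of_mul hne
  have h3 : (m.factorial : ℂ) ≠ 0 := Nat.cast_ne_zero.2 m.factorial_ne_zero
  simp only [hypergeomTerm]
  field_simp
  linear_combination (-(poch α m * poch β m)) * key

lemma mul_hypergeomSum_sub_one (α β : ℂ) {γ : ℂ} {M : ℕ} (hγ : poch γ M ≠ 0)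
    (hγ1 : γ - 1 ≠ 0) :
    (α + β - γ + 1) * (1 - γ) * hypergeomSum α β (γ - 1) M =
      ((α + β - γ + 1) * (1 - γ) + α * β) * hypergeomSum α β γ M -
        poch α (M + 1) * poch β (M + 1) / (M.factorial * poch γ M) := by
  rw [← sum_range_mul_hypergeomTerm α β hγ, hypergeomSum, hypergeomSum, mul_sum, mul_sum,
    ← sum_sub_distrib]
  refine sum_congr rfl fun m hm => ?_
  have := hypergeomTerm_sub_one_mul α β (poch_ne_zero_of_le hγ (mem_range_succ_iff.1 hm)) hγ1
  linear_combination (-(α + β - γ + 1)) * this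

lemma re_add_natCast_pos {z : ℂ} {K : ℕ} (hK : ‖z‖ < K) : 0 < (z + K).re := by
  rw [add_re, natCast_re]
  linarith [neg_abs_le z.re, abs_re_le_norm z]

lemma Gamma_add_nat_eq_poch_mul {z : ℂ} (hz : 0 < z.re) (n : ℕ) :
    Gamma (z + n) = poch z n * Gamma z := by
  rw [poch, ← Gamma_add_nat_div_Gamma_eq z, div_mul_cancel₀ _ (Gamma_ne_zero_of_re_pos hz)]
  rintro k rfl
  simp at hz
  linarith [k.cast_nonneg (α := ℝ)]

lemma tendsto_Gamma_add_nat_succ_div {z : ℂ} (hz : 0 < z.re) :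
    Tendsto (fun n : ℕ => Gamma (z + (n + 1 : ℕ)) / ((n : ℂ) ^ z * n.factorial)) atTop
      (𝓝 1) := by
  have hΓ := Gamma_ne_zero_of_re_pos hz
  have h := tendsto_const_nhds (x := Gamma z) |>.div (GammaSeq_tendsto_Gamma z) hΓ
  rw [div_self hΓ] at h
  refine h.congr fun n => ?_
  rw [Pi.div_apply, GammaSeq, div_div_eq_mul_div, Gamma_add_nat_eq_poch_mul hz,
    poch_eq_prod_range]
  ring

noncomputable def gammaRatio (a b c d : ℂ) (n : ℕ) : ℂ :=
  Gamma (a + n) * Gamma (b + n) / (Gamma (c + n) * Gamma (d + n))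

noncomputable def gammaRatioStep (a b c d : ℂ) (n : ℕ) : ℂ :=
  (c + n) * (d + n) / ((a + n) * (b + n))

lemma tendsto_gammaRatio_of_re_pos {a b c d : ℂ} (ha : 0 < a.re) (hb : 0 < b.re)
    (hc : 0 < c.re) (hd : 0 < d.re) (h : a + b = c + d) :
    Tendsto (gammaRatio a b c d) atTop (𝓝 1) := by
  rw [← tendsto_add_atTop_iff_nat 1]
  have hlim := ((tendsto_Gamma_add_nat_succ_div ha).mul (tendsto_Gamma_add_nat_succ_div hb)).div
    ((tendsto_Gamma_add_nat_succ_div hc).mul (tendsto_Gamma_add_nat_succ_div hd)) (by norm_num)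
  rw [mul_one, div_one] at hlim
  refine hlim.congr' (eventually_atTop.2 ⟨1, fun n hn => ?_⟩)
  have hn : (n : ℂ) ≠ 0 := Nat.cast_ne_zero.2 (Nat.one_le_iff_ne_zero.1 hn)
  have hpow : (n : ℂ) ^ a * (n : ℂ) ^ b = (n : ℂ) ^ c * (n : ℂ) ^ d := by
    rw [← cpow_add _ _ hn, ← cpow_add _ _ hn, h]
  have hP : (n : ℂ) ^ a * n.factorial * ((n : ℂ) ^ b * n.factorial) =
      (n : ℂ) ^ c * n.factorial * ((n : ℂ) ^ d * n.factorial) := by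
    linear_combination (n.factorial : ℂ) ^ 2 * hpow
  have hP0 : (n : ℂ) ^ c * n.factorial * ((n : ℂ) ^ d * n.factorial) ≠ 0 := by
    simp [hn, n.factorial_ne_zero]
  rw [Pi.div_apply, div_mul_div_comm, div_mul_div_comm, hP, div_div_div_cancel_right₀ hP0]
  rfl

lemma tendsto_gammaRatio {a b c d : ℂ} (h : a + b = c + d) :
    Tendsto (gammaRatio a b c d) atTop (𝓝 1) := by
  obtain ⟨K, hK⟩ := exists_nat_gt (‖a‖ + ‖b‖ + ‖c‖ + ‖d‖)
  have := norm_nonneg a; have := norm_nonneg b; have := norm_nonneg c; have := norm_nonneg d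
  rw [← tendsto_add_atTop_iff_nat K]
  refine (tendsto_gammaRatio_of_re_pos (re_add_natCast_pos (z := a) (by linarith))
    (re_add_natCast_pos (z := b) (by linarith)) (re_add_natCast_pos (z := c) (by linarith))
    (re_add_natCast_pos (z := d) (by linarith))
    (by rw [add_add_add_comm, h, add_add_add_comm])).congr fun n => ?_
  simp only [gammaRatio, Nat.cast_add, add_assoc, add_comm (K : ℂ)]

lemma half_le_norm_add_natCast {w : ℂ} {n : ℕ} (hn : 2 * ‖w‖ ≤ n) : (n : ℝ) / 2 ≤ ‖w + n‖ := by
  have := norm_sub_le (w + n) w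
  rw [add_sub_cancel_left, norm_natCast] at this
  linarith

lemma eventually_add_natCast_ne_zero (w : ℂ) : ∀ᶠ n : ℕ in atTop, w + n ≠ 0 := by
  filter_upwards [tendsto_natCast_atTop_atTop.eventually_ge_atTop (2 * ‖w‖ + 1)] with n hn
  have := norm_nonneg w
  refine norm_pos_iff.1 (lt_of_lt_of_le ?_ (half_le_norm_add_natCast (by linarith)))
  linarith

lemma eventually_gammaRatio_eq_step_mul_succ (a b c d : ℂ) :
    ∀ᶠ n in atTop,
      gammaRatio a b c d n = gammaRatioStep a b c d n * gammaRatio a b c d (n + 1) := by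
  filter_upwards [eventually_add_natCast_ne_zero a, eventually_add_natCast_ne_zero b,
    eventually_add_natCast_ne_zero c, eventually_add_natCast_ne_zero d] with n ha hb hc hd
  simp only [gammaRatio, gammaRatioStep, Nat.cast_succ, ← add_assoc, Gamma_add_one _ ha,
    Gamma_add_one _ hb, Gamma_add_one _ hc, Gamma_add_one _ hd]
  field_simp

lemma isBigO_inv_add_natCast (w : ℂ) :
    (fun n : ℕ => (w + n)⁻¹) =O[atTop] fun n => (n : ℝ)⁻¹ := by
  refine IsBigO.of_bound 2 ?_
  filter_upwards [tendsto_natCast_atTop_atTop.eventually_ge_atTop (2 * ‖w‖ + 1)] with n hn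
  have := norm_nonneg w
  have hw := half_le_norm_add_natCast (w := w) (n := n) (by linarith)
  rw [norm_inv, norm_inv, Real.norm_natCast]
  calc ‖w + n‖⁻¹ ≤ ((n : ℝ) / 2)⁻¹ := inv_anti₀ (by linarith) hw
    _ = 2 * (n : ℝ)⁻¹ := by ring

lemma eventually_pow_le_norm_poch_sub_natCast (z : ℂ) (m : ℕ) :
    ∀ᶠ n : ℕ in atTop, ((n : ℝ) / 2) ^ m ≤ ‖poch (z - n) m‖ := by
  filter_upwards [tendsto_natCast_atTop_atTop.eventually_ge_atTop (2 * (‖z‖ + m))] with n hn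
  have hfactor : ∀ j ∈ range m, (n : ℝ) / 2 ≤ ‖z - n + j‖ := by
    intro j hj
    have hj : (j : ℝ) ≤ m := by exact_mod_cast (mem_range.1 hj).le
    have hzj : ‖-z - j‖ ≤ ‖z‖ + j := by
      simpa [norm_neg] using norm_sub_le (-z) (j : ℂ)
    rw [show z - n + j = -((-z - j) + n) by ring, norm_neg]
    exact half_le_norm_add_natCast (by linarith)
  calc ((n : ℝ) / 2) ^ m = ∏ _j ∈ range m, (n : ℝ) / 2 := by rw [prod_const, card_range]
    _ ≤ ‖poch (z - n) m‖ := by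
      rw [poch_eq_prod_range, norm_prod]
      exact prod_le_prod (fun _ _ => by positivity) hfactor

lemma eventually_poch_sub_natCast_ne_zero (z : ℂ) (m : ℕ) :
    ∀ᶠ n : ℕ in atTop, poch (z - n) m ≠ 0 := by
  filter_upwards [eventually_pow_le_norm_poch_sub_natCast z m, eventually_gt_atTop 0]
    with n h hn
  exact norm_pos_iff.1 (lt_of_lt_of_le (by positivity) h)

lemma isBigO_inv_poch_sub_natCast (z : ℂ) (m : ℕ) :
    (fun n : ℕ => (poch (z - n) m)⁻¹) =O[atTop] fun n => ((n : ℝ) ^ m)⁻¹ := by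
  refine IsBigO.of_bound (2 ^ m) ?_
  filter_upwards [eventually_pow_le_norm_poch_sub_natCast z m, eventually_gt_atTop 0]
    with n h hn
  rw [norm_inv, norm_inv, norm_pow, Real.norm_natCast]
  calc ‖poch (z - n) m‖⁻¹ ≤ (((n : ℝ) / 2) ^ m)⁻¹ := inv_anti₀ (by positivity) h
    _ = 2 ^ m * ((n : ℝ) ^ m)⁻¹ := by rw [div_pow, inv_div, div_eq_mul_inv]

lemma tendsto_hypergeomSum_sub_natCast (α β z : ℂ) (M : ℕ) :
    Tendsto (fun n : ℕ => hypergeomSum α β (z - n) M) atTop (𝓝 1) := by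
  have hterm : ∀ m ∈ Icc 1 M,
      Tendsto (fun n : ℕ => hypergeomTerm α β (z - n) m) atTop (𝓝 0) := by
    intro m hm
    have hinv : Tendsto (fun n : ℕ => ((n : ℝ) ^ m)⁻¹) atTop (𝓝 0) :=
      tendsto_inv_atTop_zero.comp ((tendsto_pow_atTop
        (Nat.one_le_iff_ne_zero.1 (mem_Icc.1 hm).1)).comp tendsto_natCast_atTop_atTop)
    refine (((isBigO_inv_poch_sub_natCast z m).const_mul_left
      (poch α m * poch β m / m.factorial)).trans_tendsto hinv).congr fun n => ?_
    simp only [hypergeomTerm, div_eq_mul_inv, mul_inv]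
    ring
  simp_rw [← one_add_sum_Icc_hypergeomTerm]
  simpa using (tendsto_finsetSum _ hterm).const_add 1

lemma summable_norm_gammaRatioStep_sub_one {a b c d : ℂ} (h : a + b = c + d) :
    Summable fun n => ‖gammaRatioStep a b c d n - 1‖ := by
  have heq : (fun n => gammaRatioStep a b c d n - 1) =ᶠ[atTop]
      fun n => (c * d - a * b) * ((a + n)⁻¹ * (b + n)⁻¹) := by
    filter_upwards [eventually_add_natCast_ne_zero a, eventually_add_natCast_ne_zero b]
      with n ha hb
    rw [gammaRatioStep]
    field_simp
    linear_combination (-(n : ℂ)) * h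
  have hO := heq.trans_isBigO (((isBigO_inv_add_natCast a).mul
    (isBigO_inv_add_natCast b)).const_mul_left (c * d - a * b))
  refine summable_of_isBigO_nat (Real.summable_nat_pow_inv.2 one_lt_two) ?_
  exact hO.norm_left.congr_right fun n => by rw [← mul_inv, ← sq]

lemma isBigO_hypergeomSum_sub_gammaRatioStep_mul (a b c : ℂ) (M : ℕ) :
    (fun n : ℕ => hypergeomSum (c - a) (c - b) (1 + c - a - b - n) M -
        gammaRatioStep a b c (a + b - c) n *
          hypergeomSum (c - a) (c - b) (1 + c - a - b - (n + 1 : ℕ)) M) =O[atTop]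
      fun n => ((n : ℝ) ^ (M + 2))⁻¹ := by
  have heq : (fun n : ℕ => hypergeomSum (c - a) (c - b) (1 + c - a - b - n) M -
        gammaRatioStep a b c (a + b - c) n *
          hypergeomSum (c - a) (c - b) (1 + c - a - b - (n + 1 : ℕ)) M) =ᶠ[atTop]
      fun n => poch (c - a) (M + 1) * poch (c - b) (M + 1) / M.factorial *
        (poch (1 + c - a - b - n) M)⁻¹ * ((a + n)⁻¹ * (b + n)⁻¹) := by
    filter_upwards [eventually_poch_sub_natCast_ne_zero (1 + c - a - b) M,
      eventually_add_natCast_ne_zero a, eventually_add_natCast_ne_zero b,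
      eventually_add_natCast_ne_zero (a + b - c)] with n hγ ha hb hd
    have hγ1 : 1 + c - a - b - n - 1 ≠ 0 := by
      rwa [show 1 + c - a - b - n - 1 = -(a + b - c + n) by ring, neg_ne_zero]
    have hM : (M.factorial : ℂ) ≠ 0 := Nat.cast_ne_zero.2 M.factorial_ne_zero
    -- For `γ = 1 + c - a - b - n`: `α + β - γ + 1 = c + n`, `1 - γ = a + b - c + n`,
    -- and `(c + n) (a + b - c + n) + (c - a) (c - b) = (a + n) (b + n)`.
    have key := mul_hypergeomSum_sub_one (c - a) (c - b) hγ hγ1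
    rw [show 1 + c - a - b - ((n + 1 : ℕ) : ℂ) = 1 + c - a - b - n - 1 by push_cast; ring,
      gammaRatioStep]
    field_simp at key ⊢
    linear_combination -key
  refine heq.trans_isBigO ((((isBigO_inv_poch_sub_natCast _ M).const_mul_left _).mul
    ((isBigO_inv_add_natCast a).mul (isBigO_inv_add_natCast b))).congr_right fun n => ?_)
  rw [← mul_inv, ← mul_inv, pow_add, sq]

theorem gamma_ratio_asymptotic_expansion (a b c : ℂ) (M : ℕ) :
    (fun n : ℕ => Complex.Gamma (a + n) * Complex.Gamma (b + n) /
        (Complex.Gamma (c + n) * Complex.Gamma (a + b - c + n)) -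
      (1 + ∑ m ∈ Finset.Icc 1 M,
        poch (c - a) m * poch (c - b) m /
          ((m.factorial : ℂ) * poch (1 + c - a - b - n) m))) =O[atTop]
      fun n : ℕ => (n : ℝ) ^ (-(M : ℤ) - 1) := by
  set S : ℕ → ℂ := fun n => hypergeomSum (c - a) (c - b) (1 + c - a - b - n) M
  have hsum : a + b = c + (a + b - c) := by ring
  have hD : Tendsto (fun n => gammaRatio a b c (a + b - c) n - S n) atTop (𝓝 0) := by
    simpa using (tendsto_gammaRatio hsum).sub (tendsto_hypergeomSum_sub_natCast _ _ _ M)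
  have hrec : (fun n => (gammaRatio a b c (a + b - c) n - S n) -
      gammaRatioStep a b c (a + b - c) n * (gammaRatio a b c (a + b - c) (n + 1) - S (n + 1)))
      =O[atTop] fun n => ((n : ℝ) ^ (M + 2))⁻¹ := by
    refine (isBigO_hypergeomSum_sub_gammaRatioStep_mul a b c M).neg_left.congr' ?_
      (EventuallyEq.refl _ _)
    filter_upwards [eventually_gammaRatio_eq_step_mul_succ a b c (a + b - c)] with n hn
    simp only [S, hn]
    ring
  refine (isBigO_inv_pow_of_tendsto_zero_of_sub_mul_succ hD
    (summable_norm_gammaRatioStep_sub_one hsum) hrec).congr (fun n => ?_) fun n => ?_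
  · simp only [S, ← one_add_sum_Icc_hypergeomTerm]
    rfl
  · rw [show -(M : ℤ) - 1 = -((M + 1 : ℕ) : ℤ) by push_cast; ring, zpow_neg, zpow_natCast]
end
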